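/- arXiv:2209.14753 — 5 statements merged into one kernel-verified Lean document; each statement's English description precedes it below -/
import Mathlib

section
/- Let G be a profinite group, p a prime and P a p-Sylow subgroup of G. Let N₀ be an open normal subgroup of G and u ∈ P. Suppose that for each coset Nt with N an open normal subgroup of G, t ∈ P and Nt ⊆ N₀u, one has (a) Nt ∩ P is not contained in the conjugacy class t^G, and (b) Nt ∩ P does not have finite exponent. Then G has at least 2^ℵ₀ conjugacy classes of p^∞-elements. -/
/-!
A Cantor-scheme argument. Call `Nt ∩ P` admissible of depth `n` if `Nt ⊆ N₀u` and no element
of it has order at most `n`. By (a) such a set contains some `z` not conjugate to `t`; as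
conjugacy classes in a compact group are closed, there is an open normal `M` such that no
element of `Mt` is conjugate to an element of `Mz`, and by (b) each of `Mt ∩ P`, `Mz ∩ P`
contains an admissible set of depth `n + 1`. Following each branch `α : ℕ → Bool` of the
resulting binary tree and intersecting (by compactness) yields elements `x_α ∈ P` of infinite
order that are pairwise non-conjugate.
-/

open scoped Pointwise

universe u

/-- A topological group is pro-`p` if every open normal subgroup has `p`-power index,
i.e. all finite continuous quotients are `p`-groups. -/
def IsProPGroup (p : ℕ) (H : Type*) [Group H] [TopologicalSpace H] : Prop :=
  ∀ U : Subgroup H, U.Normal → IsOpen (U : Set H) → ∃ n : ℕ, U.index = p ^ n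

/-- A topological group is pro-`p'` if every open normal subgroup has index coprime to `p`,
i.e. all finite continuous quotients have order coprime to `p`. -/
def IsProPPrimeGroup (p : ℕ) (H : Type*) [Group H] [TopologicalSpace H] : Prop :=
  ∀ U : Subgroup H, U.Normal → IsOpen (U : Set H) → Nat.Coprime p U.index

/-- A `p`-element of a topological group: the closed subgroup it topologically generates
is a pro-`p` group (equivalently, a finite `p`-group or a copy of `ℤ_p`). -/
def IsPElement (p : ℕ) {G : Type*} [Group G] [TopologicalSpace G] [IsTopologicalGroup G]
    (x : G) : Prop :=
  IsProPGroup p (Subgroup.zpowers x).topologicalClosure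

/-- A `p^∞`-element: a `p`-element of infinite order. -/
def IsPInftyElement (p : ℕ) {G : Type*} [Group G] [TopologicalSpace G] [IsTopologicalGroup G]
    (x : G) : Prop :=
  IsPElement p x ∧ ¬ IsOfFinOrder x

/-- A `p`-Sylow subgroup of a profinite group: a maximal closed subgroup consisting of
`p`-elements. -/
def IsSylowProP (p : ℕ) {G : Type*} [Group G] [TopologicalSpace G] [IsTopologicalGroup G]
    (P : Subgroup G) : Prop :=
  IsClosed (P : Set G) ∧ (∀ x ∈ P, IsPElement p x) ∧
    ∀ Q : Subgroup G, IsClosed (Q : Set G) → (∀ x ∈ Q, IsPElement p x) → P ≤ Q → Q = P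

/-- A subset of a group has finite exponent if the orders of its elements are finite
and bounded. -/
def HasFinExponent {G : Type*} [Monoid G] (S : Set G) : Prop :=
  ∃ n : ℕ, 0 < n ∧ ∀ x ∈ S, x ^ n = 1

section BinaryTree

variable {Y : Type*}

def binaryBranch (y₀ : Y) (step : ℕ → Bool → Y → Y) (α : ℕ → Bool) : ℕ → Y
  | 0 => y₀
  | n + 1 => step n (α n) (binaryBranch y₀ step α n)

lemma binaryBranch_congr {y₀ : Y} {step : ℕ → Bool → Y → Y} {α β : ℕ → Bool} :
    ∀ {n : ℕ}, (∀ k < n, α k = β k) → binaryBranch y₀ step α n = binaryBranch y₀ step β n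
  | 0, _ => rfl
  | n + 1, h => by
    rw [binaryBranch, binaryBranch, h n n.lt_succ_self,
      binaryBranch_congr fun k hk => h k (hk.trans n.lt_succ_self)]

end BinaryTree

theorem exists_pairwise_not_rel_of_splitting {X : Type*} [TopologicalSpace X] [CompactSpace X]
    (C : ℕ → Set X → Prop) {r : X → X → Prop} (hr : ∀ ⦃x y⦄, r x y → r y x)
    (hclosed : ∀ n s, C n s → IsClosed s) (hne : ∀ n s, C n s → s.Nonempty)
    {s₀ : Set X} (h₀ : C 0 s₀)
    (hsplit : ∀ n s, C n s → ∃ a b, C (n + 1) a ∧ C (n + 1) b ∧ a ⊆ s ∧ b ⊆ s ∧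
      ∀ x ∈ a, ∀ y ∈ b, ¬ r x y) :
    ∃ f : (ℕ → Bool) → X, (∀ α n, ∃ s, C n s ∧ f α ∈ s) ∧
      Pairwise fun α β => ¬ r (f α) (f β) := by
  choose! A B hA hB hAs hBs hsep using hsplit
  set branch := binaryBranch s₀ fun n b s => cond b (A n s) (B n s)
  have hstep : ∀ n s b, C n s → C (n + 1) (cond b (A n s) (B n s)) ∧ cond b (A n s) (B n s) ⊆ s
    | n, s, true, hs => ⟨hA n s hs, hAs n s hs⟩
    | n, s, false, hs => ⟨hB n s hs, hBs n s hs⟩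
  have hC : ∀ α n, C n (branch α n) := fun α n => by
    induction n with
    | zero => exact h₀
    | succ n ih => exact (hstep n _ _ ih).1
  have hlim : ∀ α, (⋂ n, branch α n).Nonempty := fun α =>
    IsCompact.nonempty_iInter_of_sequence_nonempty_isCompact_isClosed _
      (fun n => (hstep n _ _ (hC α n)).2) (fun n => hne _ _ (hC α n))
      (hclosed _ _ (hC α 0)).isCompact (fun n => hclosed _ _ (hC α n))
  choose f hf using hlim
  refine ⟨f, fun α n => ⟨_, hC α n, Set.mem_iInter.1 (hf α) n⟩, fun α β hαβ hrel => ?_⟩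
  have hdiff := Function.ne_iff.1 hαβ
  obtain ⟨n, hn, hagree⟩ : ∃ n, α n ≠ β n ∧ ∀ k < n, α k = β k :=
    ⟨Nat.find hdiff, Nat.find_spec hdiff, fun k hk => not_not.1 (Nat.find_min hdiff hk)⟩
  have hα := Set.mem_iInter.1 (hf α) (n + 1)
  have hβ := Set.mem_iInter.1 (hf β) (n + 1)
  simp only [branch, binaryBranch, binaryBranch_congr hagree] at hα hβ
  cases hαn : α n <;> cases hβn : β n <;>
    simp only [hαn, hβn, cond, ne_eq, not_true_eq_false] at hn hα hβ
  · exact hsep _ _ (hC β n) _ hβ _ hα (hr hrel)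
  · exact hsep _ _ (hC β n) _ hα _ hβ hrel

section CosetLemmas

variable {G : Type*} [Group G]

lemma mem_mul_singleton_iff_mk_eq (N : Subgroup G) [N.Normal] {x t : G} :
    x ∈ (N : Set G) * {t} ↔ (x : G ⧸ N) = t := by
  rw [Set.mul_singleton, QuotientGroup.eq_iff_div_mem]
  exact ⟨fun ⟨n, hn, hx⟩ => hx ▸ by simpa using hn, fun hx => ⟨x / t, hx, by simp⟩⟩

lemma mul_singleton_subset_mul_singleton {M N : Subgroup G} (hMN : M ≤ N) {z t : G}
    (hz : z ∈ (N : Set G) * {t}) : (M : Set G) * {z} ⊆ (N : Set G) * {t} := by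
  rintro _ ⟨m, hm, _, rfl, rfl⟩
  obtain ⟨n, hn, _, rfl, rfl⟩ := hz
  exact ⟨m * n, N.mul_mem (hMN hm) hn, _, rfl, mul_assoc _ _ _⟩

lemma self_mem_mul_singleton (N : Subgroup G) (t : G) : t ∈ (N : Set G) * {t} :=
  ⟨1, N.one_mem, t, rfl, one_mul t⟩

end CosetLemmas

section ProfiniteGroup

variable {G : Type*} [Group G] [TopologicalSpace G] [IsTopologicalGroup G] [CompactSpace G]

lemma isClosed_setOf_isConj [T2Space G] (t : G) : IsClosed {y | IsConj t y} := by
  have : {y | IsConj t y} = Set.range fun g : G => g * t * g⁻¹ := by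
    ext y; simp [isConj_iff]
  rw [this]
  exact (isCompact_range (by fun_prop)).isClosed

variable [TotallyDisconnectedSpace G]

lemma exists_openNormal_subset {U : Set G} (hU : IsOpen U) (h1 : 1 ∈ U) :
    ∃ M : Subgroup G, M.Normal ∧ IsOpen (M : Set G) ∧ (M : Set G) ⊆ U :=
  let ⟨M, hM⟩ := ProfiniteGrp.exist_openNormalSubgroup_sub_open_nhds_of_one hU h1
  ⟨M, M.isNormal', M.isOpen, hM⟩

lemma exists_openNormal_forall_mul_singleton_pow_ne_one [T1Space G] {y : G} {m : ℕ}
    (h : y ^ m ≠ 1) : ∃ M : Subgroup G, M.Normal ∧ IsOpen (M : Set G) ∧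
      ∀ x ∈ (M : Set G) * {y}, x ^ m ≠ 1 := by
  obtain ⟨M, _, hMo, hM⟩ := exists_openNormal_subset
    (isClosed_singleton (x := y ^ m)).isOpen_compl h.symm
  refine ⟨M, inferInstance, hMo, fun x hx hxm => hM ?_ rfl⟩
  rw [SetLike.mem_coe, ← QuotientGroup.eq_one_iff, QuotientGroup.mk_pow,
    ← (mem_mul_singleton_iff_mk_eq M).1 hx, ← QuotientGroup.mk_pow, hxm, QuotientGroup.mk_one]

lemma exists_openNormal_forall_mul_singleton_not_isConj [T2Space G] {t z : G}
    (h : ¬ IsConj t z) : ∃ M : Subgroup G, M.Normal ∧ IsOpen (M : Set G) ∧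
      ∀ x ∈ (M : Set G) * {t}, ∀ y ∈ (M : Set G) * {z}, ¬ IsConj x y := by
  obtain ⟨M, _, hMo, hM⟩ := exists_openNormal_subset
    ((isClosed_setOf_isConj t).isOpen_compl.preimage (continuous_const_mul z)) (by simpa using h)
  refine ⟨M, inferInstance, hMo, fun x hx y hy hxy => ?_⟩
  obtain ⟨g, rfl⟩ := isConj_iff.1 hxy
  rw [mem_mul_singleton_iff_mk_eq] at hx hy
  have hmk : ((g * t * g⁻¹ : G) : G ⧸ M) = z := by
    simp only [QuotientGroup.mk_mul, QuotientGroup.mk_inv, ← hx, ← hy]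
  have hconj : ¬ IsConj t (z * (z⁻¹ * (g * t * g⁻¹))) := hM (QuotientGroup.eq.1 hmk.symm)
  rw [mul_inv_cancel_left] at hconj
  exact hconj (isConj_iff.2 ⟨g, rfl⟩)

end ProfiniteGroup

section Splitting

variable {G : Type*} [Group G] [TopologicalSpace G]

def IsAdmissible (P N₀ : Subgroup G) (u : G) (n : ℕ) (s : Set G) : Prop :=
  ∃ N : Subgroup G, N.Normal ∧ IsOpen (N : Set G) ∧ ∃ t ∈ P,
    (N : Set G) * {t} ⊆ (N₀ : Set G) * {u} ∧ s = (N : Set G) * {t} ∩ P ∧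
    ∀ x ∈ s, ∀ k < n, x ^ (k + 1) ≠ 1

variable {P N₀ : Subgroup G} {u : G} {n : ℕ} {s : Set G}

lemma IsAdmissible.isClosed [IsTopologicalGroup G] (hs : IsAdmissible P N₀ u n s)
    (hP : IsClosed (P : Set G)) : IsClosed s := by
  obtain ⟨N, -, hN, t, -, -, rfl, -⟩ := hs
  exact ((OpenSubgroup.isClosed ⟨N, hN⟩).mul_right_of_isCompact isCompact_singleton).inter hP

lemma IsAdmissible.nonempty (hs : IsAdmissible P N₀ u n s) : s.Nonempty := by
  obtain ⟨N, -, -, t, ht, -, rfl, -⟩ := hs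
  exact ⟨t, self_mem_mul_singleton N t, ht⟩

lemma exists_isAdmissible_succ_subset [IsTopologicalGroup G] [CompactSpace G]
    [TotallyDisconnectedSpace G] [T1Space G] {N : Subgroup G} [N.Normal]
    (hN : IsOpen (N : Set G)) {t : G} (hsub : (N : Set G) * {t} ⊆ (N₀ : Set G) * {u})
    (hn : ∀ x ∈ (N : Set G) * {t} ∩ P, ∀ k < n, x ^ (k + 1) ≠ 1)
    (hb : ¬ HasFinExponent ((N : Set G) * {t} ∩ P)) :
    ∃ a, IsAdmissible P N₀ u (n + 1) a ∧ a ⊆ (N : Set G) * {t} ∩ P := by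
  obtain ⟨y, ⟨hyN, hyP⟩, hy⟩ : ∃ y ∈ (N : Set G) * {t} ∩ P, y ^ (n + 1) ≠ 1 := by
    by_contra! h
    exact hb ⟨n + 1, n.succ_pos, h⟩
  obtain ⟨M, _, hM, hMy⟩ := exists_openNormal_forall_mul_singleton_pow_ne_one hy
  have hsub' : ((M ⊓ N : Subgroup G) : Set G) * {y} ⊆ (N : Set G) * {t} :=
    mul_singleton_subset_mul_singleton inf_le_right hyN
  have hL : IsOpen ((M ⊓ N : Subgroup G) : Set G) := by simpa using hM.inter hN
  refine ⟨_, ⟨M ⊓ N, inferInstance, hL, y, hyP, hsub'.trans hsub, rfl, ?_⟩,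
    Set.inter_subset_inter_left _ hsub'⟩
  rintro x ⟨hx, hxP⟩ k hk
  rcases Nat.lt_succ_iff_lt_or_eq.1 hk with hk | rfl
  · exact hn x ⟨hsub' hx, hxP⟩ k hk
  · exact hMy x (mul_singleton_subset_mul_singleton inf_le_left (self_mem_mul_singleton M y) hx)

lemma IsAdmissible.exists_split [IsTopologicalGroup G] [CompactSpace G]
    [TotallyDisconnectedSpace G] [T2Space G]
    (h : ∀ N : Subgroup G, N.Normal → IsOpen (N : Set G) → ∀ t ∈ P,
      (N : Set G) * {t} ⊆ (N₀ : Set G) * {u} →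
        ¬ ((N : Set G) * {t} ∩ P ⊆ {y | IsConj t y}) ∧
        ¬ HasFinExponent ((N : Set G) * {t} ∩ P))
    (hs : IsAdmissible P N₀ u n s) :
    ∃ a b, IsAdmissible P N₀ u (n + 1) a ∧ IsAdmissible P N₀ u (n + 1) b ∧ a ⊆ s ∧ b ⊆ s ∧
      ∀ x ∈ a, ∀ y ∈ b, ¬ IsConj x y := by
  obtain ⟨N, hNn, hN, t, ht, hsub, rfl, hn⟩ := hs
  obtain ⟨z, ⟨hzN, hzP⟩, htz⟩ := Set.not_subset.1 (h N hNn hN t ht hsub).1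
  obtain ⟨M, _, hM, hMtz⟩ := exists_openNormal_forall_mul_singleton_not_isConj htz
  have hL : IsOpen ((M ⊓ N : Subgroup G) : Set G) := by simpa using hM.inter hN
  have shrink : ∀ w ∈ (N : Set G) * {t} ∩ P, ∃ a, IsAdmissible P N₀ u (n + 1) a ∧
      a ⊆ (N : Set G) * {t} ∩ P ∧ a ⊆ (M : Set G) * {w} := by
    rintro w ⟨hwN, hwP⟩
    have hw : ((M ⊓ N : Subgroup G) : Set G) * {w} ⊆ (N : Set G) * {t} :=
      mul_singleton_subset_mul_singleton inf_le_right hwN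
    obtain ⟨a, ha, haw⟩ := exists_isAdmissible_succ_subset hL (hw.trans hsub)
      (fun x hx => hn x ⟨hw hx.1, hx.2⟩) (h _ inferInstance hL w hwP (hw.trans hsub)).2
    exact ⟨a, ha, haw.trans (Set.inter_subset_inter_left _ hw), haw.trans
      (Set.inter_subset_left.trans (mul_singleton_subset_mul_singleton inf_le_left
        (self_mem_mul_singleton M w)))⟩
  obtain ⟨a, ha, has, haM⟩ := shrink t ⟨self_mem_mul_singleton N t, ht⟩
  obtain ⟨b, hb, hbs, hbM⟩ := shrink z ⟨hzN, hzP⟩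
  exact ⟨a, b, ha, hb, has, hbs, fun x hx y hy => hMtz x (haM hx) y (hbM hy)⟩

lemma IsAdmissible.pow_succ_ne_one (hs : IsAdmissible P N₀ u n s) {x : G} (hx : x ∈ s) {k : ℕ}
    (hk : k < n) : x ^ (k + 1) ≠ 1 := by
  obtain ⟨N, -, -, t, -, -, rfl, hn⟩ := hs
  exact hn x hx k hk

lemma IsAdmissible.subset_subgroup (hs : IsAdmissible P N₀ u n s) : s ⊆ P := by
  obtain ⟨N, -, -, t, -, -, rfl, -⟩ := hs
  exact Set.inter_subset_right

end Splitting

theorem continuum_le_conjClasses_pInfty_general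
    {G : Type u} [Group G] [TopologicalSpace G] [IsTopologicalGroup G]
    [CompactSpace G] [T2Space G] [TotallyDisconnectedSpace G]
    (p : ℕ) (P : Subgroup G) (hP : IsSylowProP p P)
    (N₀ : Subgroup G) (hN₀norm : N₀.Normal) (hN₀open : IsOpen (N₀ : Set G))
    (u : G) (hu : u ∈ P)
    (h : ∀ N : Subgroup G, N.Normal → IsOpen (N : Set G) → ∀ t ∈ P,
      (N : Set G) * {t} ⊆ (N₀ : Set G) * {u} →
        ¬ ((N : Set G) * {t} ∩ P ⊆ {y | IsConj t y}) ∧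
        ¬ HasFinExponent ((N : Set G) * {t} ∩ P)) :
    Cardinal.continuum ≤
      Cardinal.mk {c : ConjClasses G | ∃ x ∈ c.carrier, IsPInftyElement p x} := by
  obtain ⟨f, hfC, hf⟩ := exists_pairwise_not_rel_of_splitting (IsAdmissible P N₀ u)
    (fun _ _ => IsConj.symm) (fun _ _ hs => hs.isClosed hP.1) (fun _ _ hs => hs.nonempty)
    ⟨N₀, hN₀norm, hN₀open, u, hu, subset_rfl, rfl, fun _ _ _ hk => absurd hk (Nat.not_lt_zero _)⟩
    (fun _ _ => IsAdmissible.exists_split h)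
  have hpInfty : ∀ α, IsPInftyElement p (f α) := by
    intro α
    obtain ⟨s, hs, hfs⟩ := hfC α 0
    refine ⟨hP.2.1 _ (hs.subset_subgroup hfs), fun hfin => ?_⟩
    obtain ⟨k, hk, hfk⟩ := isOfFinOrder_iff_pow_eq_one.1 hfin
    obtain ⟨k, rfl⟩ := Nat.exists_eq_succ_of_ne_zero hk.ne'
    obtain ⟨s, hs, hfs⟩ := hfC α (k + 1)
    exact hs.pow_succ_ne_one hfs k.lt_succ_self hfk
  let g : (ℕ → Bool) → {c : ConjClasses G | ∃ x ∈ c.carrier, IsPInftyElement p x} :=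
    fun α => ⟨ConjClasses.mk (f α), f α, ConjClasses.mem_carrier_mk, hpInfty α⟩
  have hg : Function.Injective g := fun α β hαβ => not_not.1 fun hne =>
    hf hne (ConjClasses.mk_eq_mk_iff_isConj.1 (congrArg Subtype.val hαβ))
  calc Cardinal.continuum = Cardinal.lift.{u} (Cardinal.mk (ℕ → Bool)) := by simp
    _ ≤ _ := by simpa using Cardinal.lift_mk_le_lift_mk_of_injective hg

/-- **Proposition 2.1.** Let `G` be a profinite group, `p` a prime and `P` a `p`-Sylow
subgroup of `G`. Let `N₀` be an open normal subgroup of `G` and `u ∈ P`. Suppose that for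
each coset `Nt` with `N` an open normal subgroup of `G`, `t ∈ P` and `Nt ⊆ N₀u`, one has
(a) `Nt ∩ P ⊄ t^G` and (b) `Nt ∩ P` does not have finite exponent. Then `G` has at
least `2^ℵ₀` conjugacy classes of `p^∞`-elements. -/
theorem continuum_le_conjClasses_pInfty
    {G : Type u} [Group G] [TopologicalSpace G] [IsTopologicalGroup G]
    [CompactSpace G] [T2Space G] [TotallyDisconnectedSpace G]
    (p : ℕ) (hp : p.Prime) (P : Subgroup G) (hP : IsSylowProP p P)
    (N₀ : Subgroup G) (hN₀norm : N₀.Normal) (hN₀open : IsOpen (N₀ : Set G))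
    (u : G) (hu : u ∈ P)
    (h : ∀ N : Subgroup G, N.Normal → IsOpen (N : Set G) → ∀ t ∈ P,
      (N : Set G) * {t} ⊆ (N₀ : Set G) * {u} →
        ¬ ((N : Set G) * {t} ∩ P ⊆ {y | IsConj t y}) ∧
        ¬ HasFinExponent ((N : Set G) * {t} ∩ P)) :
    Cardinal.continuum ≤
      Cardinal.mk {c : ConjClasses G | ∃ x ∈ c.carrier, IsPInftyElement p x} :=
  continuum_le_conjClasses_pInfty_general p P hP N₀ hN₀norm hN₀open u hu h
end

section
/- Let G be a profinite group, p a prime and P a p-Sylow subgroup of G. Let K be an open normal subgroup of G and t ∈ P with Kt ∩ P ⊆ t^G. If K is an extension of a pro-p′-group by a pro-p-group (i.e., K has a closed normal pro-p′ subgroup R with K/R a pro-p group), then t has finite order. -/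
/-!
Pass to the finite quotients `G ⧸ N` with `N ≤ K` open normal. A compactness argument produces a
compatible family of Sylow subgroups of all finite quotients containing the images of `P`; it cuts
out a closed subgroup of `p`-elements containing `P`, which is `P` by maximality, so the image `P̄`
of `P` in every finite quotient is a Sylow subgroup. In `G ⧸ N` the image `R̄` of `R` is a
`p'`-subgroup with `K̄ / R̄` a `p`-group, hence `R̄` is normal and `K̄ / R̄` lies in the Sylow
subgroup `P̄ R̄ / R̄`. So modulo `R̄` the whole coset `K̄ t̄` lies in the conjugacy class of `t̄`,
and the centralizer of `t̄` modulo `R̄`, hence the order of `t̄` modulo `R̄`, is at most `[G : K]`.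
As `P̄ ∩ R̄ = 1`, the order of `t̄` itself is at most `[G : K]`, and orders bounded in all finite
quotients force `t ^ [G : K]! = 1`.
-/

open scoped Pointwise

universe u

section FiniteGroup

variable {H : Type*} [Group H]

theorem orderOf_le_index_of_forall_isConj_mul [Finite H] (X : Subgroup H) {g : H}
    (hX : ∀ x ∈ X, IsConj g (x * g)) : orderOf g ≤ X.index := by
  set S := MulAction.stabilizer (ConjAct H) g
  have hXO : Nat.card X ≤ Nat.card (MulAction.orbit (ConjAct H) g) :=
    Nat.card_le_card_of_injective
      (fun x : X => ⟨x * g, ConjAct.mem_orbit_conjAct.mpr (hX x x.2).symm⟩)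
      fun x y hxy => Subtype.ext (mul_right_cancel (congrArg Subtype.val hxy))
  have hcard : Nat.card S * Nat.card (MulAction.orbit (ConjAct H) g) = Nat.card X * X.index := by
    rw [Nat.card_coe_set_eq, ← MulAction.index_stabilizer, Subgroup.card_mul_index,
      Subgroup.card_mul_index]
    rfl
  have hS : Nat.card S ≤ X.index :=
    le_of_mul_le_mul_left (by nlinarith) (Nat.card_pos (α := X))
  have hg : orderOf g ≤ Nat.card S := by
    rw [← Subgroup.nat_card_centralizer_nat_card_stabilizer]
    exact Nat.le_of_dvd Nat.card_pos
      (Subgroup.orderOf_dvd_natCard _ (Subgroup.mem_centralizer_singleton_iff.mpr rfl))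
  exact hg.trans hS

theorem Subgroup.normal_of_coprime_card_of_forall_pow_mem {p : ℕ} {K R : Subgroup H} [K.Normal]
    (hRK : R ≤ K) (hR : p.Coprime (Nat.card R)) (hKR : ∀ x ∈ K, ∃ j, x ^ p ^ j ∈ R) :
    R.Normal := by
  refine ⟨fun r hr g => ?_⟩
  obtain ⟨j, hj⟩ := hKR _ (‹K.Normal›.conj_mem r (hRK hr) g)
  have hcop : (p ^ j).Coprime (orderOf (g * r * g⁻¹)) := by
    rw [← MulAut.conj_apply, MulEquiv.orderOf_eq]
    exact (hR.coprime_dvd_right (R.orderOf_dvd_natCard hr)).pow_left j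
  obtain ⟨m, hm⟩ := exists_pow_eq_self_of_coprime hcop
  exact hm ▸ R.pow_mem hj m

theorem orderOf_le_index_of_forall_mem_sylow_isConj_mul [Finite H] {p : ℕ} [Fact p.Prime]
    (P : Sylow p H) {K R : Subgroup H} [K.Normal] (hRK : R ≤ K) (hR : p.Coprime (Nat.card R))
    (hKR : ∀ x ∈ K, ∃ j, x ^ p ^ j ∈ R) {t : H} (ht : t ∈ P)
    (hconj : ∀ s ∈ P, s ∈ K → IsConj t (s * t)) : orderOf t ≤ K.index := by
  have := Subgroup.normal_of_coprime_card_of_forall_pow_mem hRK hR hKR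
  set ρ := QuotientGroup.mk' R
  have hρ : Function.Surjective ρ := QuotientGroup.mk'_surjective R
  have hKp : IsPGroup p (K.map ρ) := by
    rintro ⟨_, k, hk, rfl⟩
    obtain ⟨j, hj⟩ := hKR k hk
    exact ⟨j, Subtype.ext ((QuotientGroup.eq_one_iff _).mpr hj)⟩
  have : (K.map ρ).Normal := ‹K.Normal›.map ρ hρ
  have hKP : K.map ρ ≤ P.map ρ := hKp.le_sylow_of_normal (P.mapSurjective hρ)
  have hbar : orderOf (ρ t) ≤ K.index := by
    have hindex : (K.map ρ).index = K.index :=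
      K.index_map_eq hρ ((QuotientGroup.ker_mk' R).trans_le hRK)
    rw [← hindex]
    refine orderOf_le_index_of_forall_isConj_mul _ ?_
    rintro _ ⟨k, hk, rfl⟩
    obtain ⟨s, hs, hsk⟩ := hKP ⟨k, hk, rfl⟩
    have hsK : s ∈ K :=
      inv_mem_iff.mp ((K.mul_mem_cancel_right hk).mp (hRK (QuotientGroup.eq.mp hsk)))
    rw [← hsk, ← map_mul]
    exact ρ.map_isConj (hconj s hs hsK)
  have hRP : Disjoint R P := by
    obtain ⟨n, hn⟩ := P.isPGroup'.exists_card_eq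
    exact Subgroup.disjoint_of_coprime_natCard (hn ▸ hR.symm.pow_right n)
  have hpow : t ^ orderOf (ρ t) = 1 := by
    refine Subgroup.disjoint_def.mp hRP ?_ (P.pow_mem ht _)
    rw [← QuotientGroup.eq_one_iff]
    exact (map_pow ρ t _).trans (pow_orderOf_eq_one _)
  exact (Nat.le_of_dvd (orderOf_pos _) (orderOf_dvd_of_pow_eq_one hpow)).trans hbar

end FiniteGroup

section ProP

variable {p : ℕ}

theorem IsProPGroup.exists_pow_mem {H : Type*} [Group H] [TopologicalSpace H]
    (hH : IsProPGroup p H) {U : Subgroup H} [U.Normal] (hU : IsOpen (U : Set H)) (x : H) :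
    ∃ n, x ^ p ^ n ∈ U := by
  obtain ⟨n, hn⟩ := hH U ‹_› hU
  exact ⟨n, hn ▸ U.pow_index_mem x⟩

theorem IsProPPrimeGroup.coprime_card_range {H F : Type*} [Group H] [TopologicalSpace H]
    [Group F] (hH : IsProPPrimeGroup p H) (f : H →* F) (hf : IsOpen (f.ker : Set H)) :
    p.Coprime (Nat.card f.range) :=
  Subgroup.index_ker f ▸ hH f.ker inferInstance hf

theorem IsProPGroup.exists_pow_mem_map {H F : Type*} [Group H] [TopologicalSpace H]
    [IsTopologicalGroup H] [Group F] {R : Subgroup H} [R.Normal] (hR : IsProPGroup p (H ⧸ R))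
    (f : H →* F) (hf : IsOpen (f.ker : Set H)) (x : H) : ∃ j, f x ^ p ^ j ∈ R.map f := by
  have : (f.ker.map (QuotientGroup.mk' R)).Normal :=
    .map inferInstance _ (QuotientGroup.mk'_surjective R)
  obtain ⟨j, n, hn, hnx⟩ := hR.exists_pow_mem (U := f.ker.map (QuotientGroup.mk' R))
    (QuotientGroup.isOpenMap_coe _ hf) (x : H ⧸ R)
  have hnR : n⁻¹ * x ^ p ^ j ∈ R := QuotientGroup.eq.mp hnx
  refine ⟨j, ⟨_, hnR, ?_⟩⟩
  rw [map_mul, map_inv, f.mem_ker.mp hn, inv_one, one_mul, map_pow]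

variable {G : Type*} [Group G] [TopologicalSpace G] [IsTopologicalGroup G]

theorem IsPElement.exists_pow_mem {x : G} (hx : IsPElement p x) {N : Subgroup G} [N.Normal]
    (hN : IsOpen (N : Set G)) : ∃ n, x ^ p ^ n ∈ N :=
  IsProPGroup.exists_pow_mem hx (U := N.comap (Subgroup.zpowers x).topologicalClosure.subtype)
    (hN.preimage continuous_subtype_val)
    ⟨x, Subgroup.le_topologicalClosure _ (Subgroup.mem_zpowers x)⟩

theorem isPGroup_map_mk'_of_forall_isPElement {P : Subgroup G} (hP : ∀ x ∈ P, IsPElement p x)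
    {N : Subgroup G} [N.Normal] (hN : IsOpen (N : Set G)) :
    IsPGroup p (P.map (QuotientGroup.mk' N)) := by
  rintro ⟨_, x, hx, rfl⟩
  obtain ⟨n, hn⟩ := (hP x hx).exists_pow_mem hN
  exact ⟨n, Subtype.ext ((map_pow _ x _).symm.trans ((QuotientGroup.eq_one_iff _).mpr hn))⟩

theorem isPElement_of_forall_isPGroup_map_mk' [CompactSpace G] [TotallyDisconnectedSpace G]
    [Fact p.Prime] {Q : Subgroup G} (hQ : IsClosed (Q : Set G))
    (hQp : ∀ N : OpenNormalSubgroup G, IsPGroup p (Q.map (QuotientGroup.mk' (N : Subgroup G))))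
    {x : G} (hx : x ∈ Q) : IsPElement p x := by
  have hTQ : (Subgroup.zpowers x).topologicalClosure ≤ Q :=
    (Subgroup.zpowers x).topologicalClosure_minimal (Subgroup.zpowers_le.mpr hx) hQ
  intro U _ hUo
  obtain ⟨V, hVo, hVU⟩ := isOpen_induced_iff.mp hUo
  have hV : (1 : G) ∈ V :=
    show (1 : (Subgroup.zpowers x).topologicalClosure) ∈ Subtype.val ⁻¹' V from hVU ▸ U.one_mem
  obtain ⟨N, hNV⟩ := ProfiniteGrp.exist_openNormalSubgroup_sub_open_nhds_of_one hVo hV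
  have hle : (N : Subgroup G).comap (Subgroup.zpowers x).topologicalClosure.subtype ≤ U :=
    fun y hy => (hVU ▸ hNV hy : y ∈ (U : Set _))
  obtain ⟨k, hk⟩ := ((hQp N).to_le (Subgroup.map_mono hTQ)).exists_card_eq
  have hidx :
      ((N : Subgroup G).comap (Subgroup.zpowers x).topologicalClosure.subtype).index = p ^ k := by
    rw [Subgroup.index_comap, Subgroup.range_subtype, ← QuotientGroup.ker_mk' (N : Subgroup G),
      Subgroup.relIndex_ker, hk]
  obtain ⟨m, -, hm⟩ := (Nat.dvd_prime_pow Fact.out).mp (hidx ▸ Subgroup.index_dvd_of_le hle)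
  exact ⟨m, hm⟩

end ProP

theorem mem_image_iInter_of_directed {X Y ι : Type*} [TopologicalSpace X] [CompactSpace X]
    [Nonempty ι] {C : ι → Set X} (hC : Directed (· ⊇ ·) C) (hCc : ∀ i, IsClosed (C i))
    {f : X → Y} {y : Y} (hy : IsClosed (f ⁻¹' {y})) (h : ∀ i, y ∈ f '' C i) :
    y ∈ f '' ⋂ i, C i := by
  obtain ⟨x, hx⟩ := IsCompact.nonempty_iInter_of_directed_nonempty_isCompact_isClosed
    (fun i => f ⁻¹' {y} ∩ C i)
    (Directed.mono_comp _ (fun _ _ h => Set.inter_subset_inter_right _ h) hC)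
    (fun i => by obtain ⟨x, hx, rfl⟩ := h i; exact ⟨x, rfl, hx⟩)
    (fun i => (hy.inter (hCc i)).isCompact) (fun i => hy.inter (hCc i))
  rw [Set.mem_iInter] at hx
  exact ⟨x, Set.mem_iInter.mpr fun i => (hx i).2, (hx (Classical.arbitrary ι)).1⟩

section QuotientMaps

open QuotientGroup

variable {G : Type*} [Group G]

def quotientMapOfLE {N M : Subgroup G} [N.Normal] [M.Normal] (h : N ≤ M) : G ⧸ N →* G ⧸ M :=
  map N M (MonoidHom.id G) h

theorem quotientMapOfLE_comp_mk' {N M : Subgroup G} [N.Normal] [M.Normal] (h : N ≤ M) :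
    (quotientMapOfLE h).comp (mk' N) = mk' M :=
  rfl

theorem quotientMapOfLE_refl (N : Subgroup G) [N.Normal] :
    quotientMapOfLE (le_refl N) = MonoidHom.id (G ⧸ N) :=
  map_id N

theorem quotientMapOfLE_comp_quotientMapOfLE {N M L : Subgroup G} [N.Normal] [M.Normal] [L.Normal]
    (h₁ : N ≤ M) (h₂ : M ≤ L) :
    (quotientMapOfLE h₂).comp (quotientMapOfLE h₁) = quotientMapOfLE (h₁.trans h₂) :=
  map_comp_map N M L (MonoidHom.id G) (MonoidHom.id G) h₁ h₂

theorem quotientMapOfLE_surjective {N M : Subgroup G} [N.Normal] [M.Normal] (h : N ≤ M) :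
    Function.Surjective (quotientMapOfLE h) :=
  map_surjective_of_surjective _ _ _ mk_surjective h

variable [TopologicalSpace G] [IsTopologicalGroup G]

theorem isClosed_comap_mk' (N : OpenNormalSubgroup G) (S : Subgroup (G ⧸ (N : Subgroup G))) :
    IsClosed ((S.comap (mk' (N : Subgroup G)) : Subgroup G) : Set G) :=
  Subgroup.isClosed_of_isOpen _ (Subgroup.isOpen_mono
    (fun n hn => by simp [(eq_one_iff n).mpr hn]) N.isOpen)

theorem map_iInf_comap_mk'_eq [CompactSpace G]
    (σ : ∀ N : OpenNormalSubgroup G, Subgroup (G ⧸ (N : Subgroup G)))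
    (hσ : ∀ {N M : OpenNormalSubgroup G} (h : N ≤ M), (σ N).map (quotientMapOfLE h) = σ M)
    (N₀ : OpenNormalSubgroup G) :
    (⨅ N, (σ N).comap (mk' (N : Subgroup G))).map (mk' (N₀ : Subgroup G)) = σ N₀ := by
  set C := fun N : OpenNormalSubgroup G => (σ N).comap (mk' (N : Subgroup G))
  have hmono {N M : OpenNormalSubgroup G} (h : N ≤ M) : C N ≤ C M := fun x hx => by
    rw [Subgroup.mem_comap, ← hσ h]
    exact Subgroup.mem_map_of_mem (quotientMapOfLE h) hx
  have hmap {N : OpenNormalSubgroup G} (h : N ≤ N₀) :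
      (C N).map (mk' (N₀ : Subgroup G)) = σ N₀ := by
    rw [← hσ h, ← quotientMapOfLE_comp_mk' h, ← Subgroup.map_map,
      Subgroup.map_comap_eq_self_of_surjective (mk'_surjective _)]
  refine le_antisymm (Subgroup.map_le_iff_le_comap.mpr (iInf_le C N₀)) fun y hy => ?_
  have : DiscreteTopology (G ⧸ (N₀ : Subgroup G)) := discreteTopology N₀.isOpen
  have : Nonempty (OpenNormalSubgroup G) := ⟨N₀⟩
  have hy' := mem_image_iInter_of_directed (C := fun N => (C N : Set G))
    (fun N M => ⟨N ⊓ M, hmono inf_le_left, hmono inf_le_right⟩)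
    (fun N => isClosed_comap_mk' N (σ N))
    ((isClosed_discrete {y}).preimage continuous_mk)
    (fun N => Set.image_mono (hmono (inf_le_left (b := N₀))) ((hmap inf_le_right).ge hy))
  rwa [← Subgroup.coe_iInf] at hy'

end QuotientMaps

section SylowSystem

open CategoryTheory QuotientGroup

variable {G : Type*} [Group G] [TopologicalSpace G] [IsTopologicalGroup G] [CompactSpace G]
  (p : ℕ) [Fact p.Prime] (P : Subgroup G)

def sylowSystem : OpenNormalSubgroup G ⥤ Type _ where
  obj N := {S : Sylow p (G ⧸ (N : Subgroup G)) // P.map (mk' (N : Subgroup G)) ≤ S}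
  map {N M} f := TypeCat.ofHom fun S =>
    ⟨S.1.mapSurjective (quotientMapOfLE_surjective (leOfHom f)), by
      rw [Sylow.coe_mapSurjective, ← quotientMapOfLE_comp_mk' (leOfHom f), ← Subgroup.map_map]
      exact Subgroup.map_mono S.2⟩
  map_id N := by
    refine ConcreteCategory.hom_ext _ _ fun S => Subtype.ext (Sylow.ext ?_)
    dsimp
    rw [quotientMapOfLE_refl, Subgroup.map_id]
  map_comp f g := by
    refine ConcreteCategory.hom_ext _ _ fun S => Subtype.ext (Sylow.ext ?_)
    dsimp
    rw [Subgroup.map_map, quotientMapOfLE_comp_quotientMapOfLE]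

variable {p P}

theorem exists_compatible_sylow (hP : ∀ x ∈ P, IsPElement p x) :
    ∃ σ : ∀ N : OpenNormalSubgroup G, Sylow p (G ⧸ (N : Subgroup G)),
      (∀ N : OpenNormalSubgroup G, P.map (mk' (N : Subgroup G)) ≤ σ N) ∧
      ∀ {N M : OpenNormalSubgroup G} (h : N ≤ M),
        (σ N : Subgroup _).map (quotientMapOfLE h) = σ M := by
  have (N : OpenNormalSubgroup G) : Nonempty ((sylowSystem p P).obj N) :=
    let ⟨S, hS⟩ := (isPGroup_map_mk'_of_forall_isPElement hP N.isOpen).exists_le_sylow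
    ⟨⟨S, hS⟩⟩
  have (N : OpenNormalSubgroup G) : Finite ((sylowSystem p P).obj N) := Subtype.finite
  obtain ⟨u, hu⟩ := nonempty_sections_of_finite_cofiltered_system (sylowSystem p P)
  refine ⟨fun N => (u N).1, fun N => (u N).2, fun {_ M} h => ?_⟩
  exact congrArg (fun S : (sylowSystem p P).obj M => (S.1 : Subgroup (G ⧸ (M : Subgroup G))))
    (hu (homOfLE h))

theorem IsSylowProP.exists_sylow_eq_map [TotallyDisconnectedSpace G] (hP : IsSylowProP p P)
    (N₀ : OpenNormalSubgroup G) :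
    ∃ S : Sylow p (G ⧸ (N₀ : Subgroup G)), (S : Subgroup _) = P.map (mk' (N₀ : Subgroup G)) := by
  obtain ⟨σ, hPσ, hσ⟩ := exists_compatible_sylow hP.2.1
  set Q := ⨅ N : OpenNormalSubgroup G, (σ N : Subgroup _).comap (mk' (N : Subgroup G))
  have hQσ := map_iInf_comap_mk'_eq (fun N => σ N) hσ
  have hQ : IsClosed (Q : Set G) := by
    rw [Subgroup.coe_iInf]
    exact isClosed_iInter fun N => isClosed_comap_mk' N (σ N)
  have hQP : Q = P := hP.2.2 Q hQ
    (fun x => isPElement_of_forall_isPGroup_map_mk' hQ fun N => hQσ N ▸ (σ N).isPGroup')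
    (le_iInf fun N => Subgroup.map_le_iff_le_comap.mp (hPσ N))
  exact ⟨σ N₀, by rw [← hQP, hQσ]⟩

end SylowSystem

section Profinite

open QuotientGroup

variable {G : Type*} [Group G] [TopologicalSpace G]

theorem isOpen_ker_mk'_comp (N : OpenNormalSubgroup G) {H : Type*} [Group H] [TopologicalSpace H]
    {g : H →* G} (hg : Continuous g) : IsOpen (((mk' (N : Subgroup G)).comp g).ker : Set H) := by
  rw [← MonoidHom.comap_ker, ker_mk']
  exact N.isOpen.preimage hg

theorem isOfFinOrder_of_forall_orderOf_mk'_le [IsTopologicalGroup G] [CompactSpace G]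
    [TotallyDisconnectedSpace G] {K : Subgroup G} (hK : IsOpen (K : Set G)) {x : G} {m : ℕ}
    (h : ∀ N : OpenNormalSubgroup G, (N : Subgroup G) ≤ K →
      orderOf (mk' (N : Subgroup G) x) ≤ m) :
    IsOfFinOrder x := by
  refine isOfFinOrder_iff_pow_eq_one.mpr ⟨m.factorial, m.factorial_pos, ?_⟩
  by_contra hx
  obtain ⟨N, hN⟩ := ProfiniteGrp.exist_openNormalSubgroup_sub_open_nhds_of_one
    (hK.inter isOpen_compl_singleton) ⟨K.one_mem, Ne.symm hx⟩
  have hxN : x ^ m.factorial ∈ (N : Subgroup G) := by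
    rw [← eq_one_iff]
    exact (map_pow (mk' _) x _).trans (orderOf_dvd_iff_pow_eq_one.mp
      (Nat.dvd_factorial (orderOf_pos _) (h N fun y hy => (hN hy).1)))
  exact (hN hxN).2 rfl

end Profinite

open QuotientGroup in
theorem isOfFinOrder_of_coset_subset_conjClass_of_extension_general
    {G : Type u} [Group G] [TopologicalSpace G] [IsTopologicalGroup G]
    [CompactSpace G] [TotallyDisconnectedSpace G]
    (p : ℕ) (hp : p.Prime)
    (P : Subgroup G) (hP : IsSylowProP p P)
    (K : Subgroup G) (hKopen : IsOpen (K : Set G)) (hKnorm : K.Normal)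
    (t : G) (ht : t ∈ P)
    (hconj : (K : Set G) * {t} ∩ P ⊆ {y | IsConj t y})
    (R : Subgroup K) (hRnorm : R.Normal)
    (hRp' : IsProPPrimeGroup p R) (hquot : IsProPGroup p (K ⧸ R)) :
    IsOfFinOrder t := by
  have : Fact p.Prime := ⟨hp⟩
  refine isOfFinOrder_of_forall_orderOf_mk'_le (m := K.index) hKopen fun N hNK => ?_
  set π := mk' (N : Subgroup G)
  set f := π.comp K.subtype
  obtain ⟨S, hS⟩ := hP.exists_sylow_eq_map N
  have hkerK : π.ker ≤ K := (ker_mk' _).trans_le hNK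
  have : (K.map π).Normal := hKnorm.map π (mk'_surjective _)
  rw [← K.index_map_eq (mk'_surjective _) hkerK]
  refine orderOf_le_index_of_forall_mem_sylow_isConj_mul S (R := R.map f) ?_ ?_ ?_
    (show π t ∈ (S : Subgroup _) from hS ▸ Subgroup.mem_map_of_mem π ht) ?_
  · rintro _ ⟨r, -, rfl⟩
    exact ⟨r, r.2, rfl⟩
  · have := hRp'.coprime_card_range _ (isOpen_ker_mk'_comp N (g := K.subtype.comp R.subtype)
      (continuous_subtype_val.comp continuous_subtype_val))
    rwa [MonoidHom.range_comp, MonoidHom.range_comp, Subgroup.range_subtype, Subgroup.map_map]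
      at this
  · rintro _ ⟨k, hk, rfl⟩
    exact hquot.exists_pow_mem_map f (isOpen_ker_mk'_comp N continuous_subtype_val) ⟨k, hk⟩
  · intro s (hs : s ∈ (S : Subgroup _)) hsK
    rw [hS] at hs
    obtain ⟨s, hsP, rfl⟩ := hs
    have hsK : s ∈ K := Subgroup.comap_map_eq_self hkerK ▸ hsK
    rw [← map_mul]
    exact π.map_isConj (hconj ⟨Set.mul_mem_mul hsK rfl, P.mul_mem hsP ht⟩)

/-- **Lemma 2.2(b).** Let `G` be a profinite group, `p` a prime and `P` a `p`-Sylow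
subgroup. Let `K` be an open normal subgroup and `t ∈ P` with `Kt ∩ P ⊆ t^G`. If `K` is
an extension of a pro-`p'`-group by a pro-`p`-group, then `t` has finite order. -/
theorem isOfFinOrder_of_coset_subset_conjClass_of_extension
    {G : Type u} [Group G] [TopologicalSpace G] [IsTopologicalGroup G]
    [CompactSpace G] [T2Space G] [TotallyDisconnectedSpace G]
    (p : ℕ) (hp : p.Prime)
    (P : Subgroup G) (hP : IsSylowProP p P)
    (K : Subgroup G) (hKopen : IsOpen (K : Set G)) (hKnorm : K.Normal)
    (t : G) (ht : t ∈ P)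
    (hconj : (K : Set G) * {t} ∩ P ⊆ {y | IsConj t y})
    (R : Subgroup K) (hRclosed : IsClosed (R : Set K)) (hRnorm : R.Normal)
    (hRp' : IsProPPrimeGroup p R) (hquot : IsProPGroup p (K ⧸ R)) :
    IsOfFinOrder t :=
  isOfFinOrder_of_coset_subset_conjClass_of_extension_general p hp P hP K hKopen hKnorm t ht hconj R
    hRnorm hRp' hquot
end

section
/- Let G be a profinite group, K an open normal subgroup of G, and t ∈ G such that Kt ⊆ t^G. Then the centralizer C_G(t) is finite of order at most the index |G : K|; in particular, t has finite order. -/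
open scoped Pointwise

universe u

/-!
Pass to a finite quotient `Q = G/N` by an open normal subgroup, with `L` the image of `K` and
`s` that of `t`. There `Ls ⊆ s^Q` gives `|L| ≤ |s^Q| = |Q : C_Q(s)|`, and with `|Q| = |L| |Q : L|`
this is `|C_Q(s)| ≤ |Q : L| ≤ |G : K|`. Open normal subgroups separate the points of any finite
subset of a profinite group, so every finite subset of `C_G(t)` embeds into some `C_{G/N}(tN)`;
hence `|C_G(t)| ≤ |G : K|`, and `t` has finite order because `⟨t⟩ ≤ C_G(t)`.
-/

open Subgroup MulAction in
theorem card_centralizer_le_index_of_mul_singleton_subset {Q : Type*} [Group Q] [Finite Q]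
    (L : Subgroup Q) (s : Q) (h : (L : Set Q) * {s} ⊆ {y | IsConj s y}) :
    Nat.card (centralizer {s} : Subgroup Q) ≤ L.index := by
  have hL : Nat.card L ≤ (stabilizer (ConjAct Q) s).index := calc
    Nat.card L = ((L : Set Q) * {s}).ncard := by
      rw [Set.mul_singleton, Set.ncard_image_of_injective _ (mul_left_injective s)]; rfl
    _ ≤ (orbit (ConjAct Q) s).ncard := by
      refine Set.ncard_le_ncard (h.trans fun y hy => ?_) (Set.toFinite _)
      rwa [ConjAct.mem_orbit_conjAct, isConj_comm]
    _ = (stabilizer (ConjAct Q) s).index := (index_stabilizer _ s).symm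
  refine Nat.le_of_mul_le_mul_left ?_ (Nat.card_pos (α := L))
  calc Nat.card L * Nat.card (centralizer {s} : Subgroup Q)
      ≤ (stabilizer (ConjAct Q) s).index * Nat.card (stabilizer (ConjAct Q) s) := by
        rw [nat_card_centralizer_nat_card_stabilizer]; gcongr
    _ = Nat.card L * L.index := by
        rw [mul_comm, card_mul_index, card_mul_index]; rfl

theorem map_mul_singleton_subset_setOf_isConj {G H : Type*} [Group G] [Group H] {K : Subgroup G}
    {t : G} (hconj : (K : Set G) * {t} ⊆ {y | IsConj t y}) (f : G →* H) :
    (K.map f : Set H) * {f t} ⊆ {y | IsConj (f t) y} := by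
  rintro - ⟨-, ⟨k, hk, rfl⟩, -, rfl, rfl⟩
  simpa using f.map_isConj (hconj (Set.mul_mem_mul hk rfl))

theorem card_centralizer_le_index_of_surjective {G H : Type*} [Group G] [Group H] [Finite H]
    {K : Subgroup G} [K.FiniteIndex] {t : G} (hconj : (K : Set G) * {t} ⊆ {y | IsConj t y})
    {f : G →* H} (hf : Function.Surjective f) :
    Nat.card (Subgroup.centralizer {f t} : Subgroup H) ≤ K.index :=
  (card_centralizer_le_index_of_mul_singleton_subset _ _
    (map_mul_singleton_subset_setOf_isConj hconj f)).trans
    (Nat.le_of_dvd (Nat.pos_of_ne_zero Subgroup.FiniteIndex.index_ne_zero) (K.index_map_dvd hf))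

theorem exists_openNormalSubgroup_injOn_mk {G : Type*} [Group G] [TopologicalSpace G]
    [IsTopologicalGroup G] [CompactSpace G] [TotallyDisconnectedSpace G] {F : Set G}
    (hF : F.Finite) :
    ∃ N : OpenNormalSubgroup G, F.InjOn (QuotientGroup.mk : G → G ⧸ N.toSubgroup) := by
  have hD : IsOpen {x ∈ F⁻¹ * F | x ≠ 1}ᶜ := ((hF.inv.mul hF).sep _).isClosed.isOpen_compl
  obtain ⟨N, hN⟩ := ProfiniteGrp.exist_openNormalSubgroup_sub_open_nhds_of_one hD (by simp)
  refine ⟨N, fun x hx y hy hxy => ?_⟩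
  by_contra hne
  exact hN (QuotientGroup.eq.mp hxy)
    ⟨Set.mul_mem_mul (Set.inv_mem_inv.mpr hx) hy, fun h => hne (inv_mul_eq_one.mp h)⟩

theorem encard_le_of_forall_ncard_image_mk_le {G : Type*} [Group G] [TopologicalSpace G]
    [IsTopologicalGroup G] [CompactSpace G] [TotallyDisconnectedSpace G] {S : Set G} {n : ℕ}
    (h : ∀ N : OpenNormalSubgroup G,
      ((QuotientGroup.mk : G → G ⧸ N.toSubgroup) '' S).ncard ≤ n) :
    S.encard ≤ n := by
  by_contra! hlt
  obtain ⟨F, hFS, hFcard⟩ := Set.exists_subset_encard_eq (Order.add_one_le_of_lt hlt)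
  obtain ⟨N, hN⟩ := exists_openNormalSubgroup_injOn_mk (Set.finite_of_encard_eq_coe hFcard)
  set π : G → G ⧸ N.toSubgroup := QuotientGroup.mk
  have hle : ((n + 1 : ℕ) : ℕ∞) ≤ n := calc
    ((n + 1 : ℕ) : ℕ∞) = (π '' F).encard := by rw [hN.encard_image, hFcard, Nat.cast_succ]
    _ ≤ (π '' S).encard := Set.encard_le_encard (Set.image_mono hFS)
    _ = (π '' S).ncard := (Set.toFinite _).cast_ncard_eq.symm
    _ ≤ n := by exact_mod_cast h N
  exact Nat.not_succ_le_self n (Nat.cast_le.mp hle)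

theorem centralizer_finite_of_coset_subset_conjClass_general
    {G : Type u} [Group G] [TopologicalSpace G] [IsTopologicalGroup G]
    [CompactSpace G] [TotallyDisconnectedSpace G]
    (K : Subgroup G) (hKopen : IsOpen (K : Set G))
    (t : G) (hconj : (K : Set G) * {t} ⊆ {y | IsConj t y}) :
    ((Subgroup.centralizer {t} : Subgroup G) : Set G).Finite ∧
      Nat.card (Subgroup.centralizer {t} : Subgroup G) ≤ K.index ∧
      IsOfFinOrder t := by
  have : Finite (G ⧸ K) := K.quotient_finite_of_isOpen hKopen
  have : K.FiniteIndex := K.finiteIndex_of_finite_quotient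
  set C := Subgroup.centralizer {t}
  have hC : (C : Set G).encard ≤ K.index := encard_le_of_forall_ncard_image_mk_le fun N => by
    let π := QuotientGroup.mk' N.toSubgroup
    have image_le : π '' C ⊆ Subgroup.centralizer {π t} := by
      rw [← Subgroup.coe_map, ← Set.image_singleton]
      exact Subgroup.map_centralizer_le_centralizer_image _ _
    calc (π '' C).ncard ≤ Nat.card (Subgroup.centralizer {π t}) :=
          (Set.ncard_le_ncard image_le (Set.toFinite _)).trans_eq (Nat.card_coe_set_eq _).symm
      _ ≤ K.index :=
          card_centralizer_le_index_of_surjective hconj (QuotientGroup.mk'_surjective _)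
  obtain ⟨hfin, hcard⟩ := Set.encard_le_coe_iff_finite_ncard_le.mp hC
  refine ⟨hfin, (Nat.card_coe_set_eq (C : Set G)).trans_le hcard, ?_⟩
  have hzpowers : Subgroup.zpowers t ≤ C :=
    Subgroup.zpowers_le.mpr (Subgroup.mem_centralizer_singleton_iff.mpr rfl)
  exact finite_zpowers.mp (hfin.subset hzpowers)

/-- Let `G` be a profinite group, `K` an open normal subgroup and `t ∈ G` with
`Kt ⊆ t^G`. Then the centralizer of `t` in `G` is finite of order at most `|G : K|`;
in particular `t` has finite order. -/
theorem centralizer_finite_of_coset_subset_conjClass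
    {G : Type u} [Group G] [TopologicalSpace G] [IsTopologicalGroup G]
    [CompactSpace G] [T2Space G] [TotallyDisconnectedSpace G]
    (K : Subgroup G) (hKopen : IsOpen (K : Set G)) (hKnorm : K.Normal)
    (t : G) (hconj : (K : Set G) * {t} ⊆ {y | IsConj t y}) :
    ((Subgroup.centralizer {t} : Subgroup G) : Set G).Finite ∧
      Nat.card (Subgroup.centralizer {t} : Subgroup G) ≤ K.index ∧
      IsOfFinOrder t :=
  centralizer_finite_of_coset_subset_conjClass_general K hKopen t hconj
end

section
/- Let I be an infinite set of primes and let A be the Cartesian product over p ∈ I of non-trivial procyclic p-groups A_p. Then A contains a family of at least 2^ℵ₀ elements of infinite order such that the closed subgroups topologically generated by any two distinct members of the family are non-isomorphic as topological groups; in particular, A has at least 2^ℵ₀ conjugacy classes of elements of infinite order. -/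
/-!
Fix topological generators `g p` of the factors and, for `S ⊆ I`, let `x S` agree with `g` on `S`
and be `1` off `S`. For `p ∈ S` the closure of `⟨x S⟩` maps onto `A p`, so it has an open normal
subgroup of index divisible by `p`. For `p ∉ S` it sits inside a product whose `p`-coordinate is
trivial and whose other factors are pro-`q` with `q ≠ p`, so every open normal subgroup has index
prime to `p`. Thus the topological group `closure ⟨x S⟩` determines `S`. A finite order of `x S`
would be divisible by every `p ∈ S`, so infinite `S` give elements of infinite order, and a
countably infinite set has `2^ℵ₀` infinite subsets. Finally the product is abelian, so its
conjugacy classes are singletons.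
-/

open scoped Pointwise

universe u

open Subgroup

section ProPPrime

variable {G H : Type*} [Group G] [TopologicalSpace G] [Group H] [TopologicalSpace H] {p : ℕ}

theorem IsProPGroup.isProPPrimeGroup {q : ℕ} (hp : p.Prime) (hq : q.Prime) (hpq : p ≠ q)
    (h : IsProPGroup q G) : IsProPPrimeGroup p G := fun U hU hUo => by
  obtain ⟨n, hn⟩ := h U hU hUo
  exact hn ▸ ((Nat.coprime_primes hp hq).mpr hpq).pow_right n

theorem IsProPPrimeGroup.of_surjective (h : IsProPPrimeGroup p G) (f : G →* H)
    (hf : Continuous f) (hsurj : Function.Surjective f) : IsProPPrimeGroup p H :=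
  fun U hU hUo => index_comap_of_surjective U hsurj ▸ h (U.comap f) (hU.comap f) (hUo.preimage hf)

variable [IsTopologicalGroup G]

theorem IsProPGroup.not_isProPPrimeGroup [CompactSpace G] [T2Space G]
    [TotallyDisconnectedSpace G] [Nontrivial G] (hp : p.Prime) (h : IsProPGroup p G) :
    ¬ IsProPPrimeGroup p G := by
  intro h'
  obtain ⟨a, ha⟩ := exists_ne (1 : G)
  obtain ⟨N, hN⟩ := ProfiniteGrp.exist_openNormalSubgroup_sub_open_nhds_of_one
    (isOpen_compl_singleton (x := a)) ha.symm
  obtain ⟨n, hn⟩ := h N.toSubgroup N.isNormal' N.isOpen'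
  have hn0 : n ≠ 0 := by
    rintro rfl
    have hNtop : N.toSubgroup = ⊤ := index_eq_one.mp hn
    exact hN (hNtop ▸ mem_top a :) rfl
  have hcop := h' N.toSubgroup N.isNormal' N.isOpen'
  exact hp.coprime_iff_not_dvd.mp hcop (hn ▸ dvd_pow_self p hn0)

theorem isProPPrimeGroup_topologicalClosure_zpowers [T2Space G] {x : G} (hx : IsOfFinOrder x)
    (hp : p.Coprime (orderOf x)) : IsProPPrimeGroup p (zpowers x).topologicalClosure := by
  have hclosed : (zpowers x).topologicalClosure = zpowers x :=
    le_antisymm (topologicalClosure_minimal _ le_rfl hx.finite_zpowers.isClosed)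
      (le_topologicalClosure _)
  rw [hclosed]
  intro U _ _
  exact hp.coprime_dvd_right (Nat.card_zpowers x ▸ U.index_dvd_card)

theorem not_isOfFinOrder_of_infinite_not_isProPPrimeGroup [T2Space G] {x : G}
    (h : {p : ℕ | p.Prime ∧ ¬ IsProPPrimeGroup p (zpowers x).topologicalClosure}.Infinite) :
    ¬ IsOfFinOrder x := fun hx => by
  obtain ⟨p, ⟨hp, hnot⟩, hlt⟩ := h.exists_gt (orderOf x)
  exact hnot (isProPPrimeGroup_topologicalClosure_zpowers hx
    (Nat.coprime_of_lt_prime hx.orderOf_pos.ne' hlt hp))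

theorem MonoidHom.surjective_restrict_topologicalClosure_zpowers [CompactSpace G]
    [IsTopologicalGroup H] [T2Space H] (f : G →* H) (hf : Continuous f) {x : G}
    (hx : (zpowers (f x)).topologicalClosure = ⊤) :
    Function.Surjective (f.comp (zpowers x).topologicalClosure.subtype) := by
  have hclosed : IsClosed (((zpowers x).topologicalClosure.map f : Subgroup H) : Set H) :=
    ((isClosed_topologicalClosure _).isCompact.image hf).isClosed
  rw [← MonoidHom.range_eq_top, MonoidHom.range_comp, range_subtype, eq_top_iff, ← hx]
  exact topologicalClosure_minimal _
    (zpowers_le.mpr ⟨x, le_topologicalClosure _ (mem_zpowers x), rfl⟩) hclosed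

theorem ne_one_of_topologicalClosure_zpowers_eq_top [T2Space G] [Nontrivial G] {g : G}
    (hg : (zpowers g).topologicalClosure = ⊤) : g ≠ 1 := by
  rintro rfl
  obtain ⟨a, ha⟩ := exists_ne (1 : G)
  have htop : ((⊤ : Subgroup G) : Set G) = {1} := by
    rw [← hg, zpowers_one_eq_bot, coe_topologicalClosure_bot, closure_singleton]
  have ha' : a ∈ ((⊤ : Subgroup G) : Set G) := mem_top a
  rw [htop] at ha'
  exact ha ha'

theorem commute_of_topologicalClosure_zpowers_eq_top [T2Space G] {g : G}
    (hg : (zpowers g).topologicalClosure = ⊤) (a b : G) : Commute a b := by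
  let := (zpowers g).commGroupTopologicalClosure fun u v => IsMulCommutative.is_comm.comm u v
  have hmem : ∀ c : G, c ∈ (zpowers g).topologicalClosure := hg ▸ mem_top
  exact congrArg Subtype.val
    (mul_comm (⟨a, hmem a⟩ : (zpowers g).topologicalClosure) ⟨b, hmem b⟩)

end ProPPrime

theorem isProPPrimeGroup_of_forall_isProPPrimeGroup_or_eq_one {ι : Type*} {B : ι → Type*}
    [∀ i, Group (B i)] [∀ i, TopologicalSpace (B i)] [∀ i, IsTopologicalGroup (B i)]
    [∀ i, CompactSpace (B i)] [∀ i, TotallyDisconnectedSpace (B i)] {p : ℕ}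
    (K : Subgroup (Π i, B i)) (hK : ∀ i, IsProPPrimeGroup p (B i) ∨ ∀ y ∈ K, y i = 1) :
    IsProPPrimeGroup p K := by
  intro U _ hUo
  obtain ⟨V, hVo, hVU⟩ := isOpen_induced_iff.mp hUo
  have h1V : (1 : Π i, B i) ∈ V := show (1 : K) ∈ Subtype.val ⁻¹' V from hVU ▸ U.one_mem
  obtain ⟨F, u, hu, huV⟩ := isOpen_pi_iff.mp hVo 1 h1V
  have hW : ∀ i, ∃ W : Subgroup (B i), W.Normal ∧ p.Coprime W.index ∧
      (i ∈ F → ∀ y ∈ K, y i ∈ W → y i ∈ u i) := by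
    intro i
    -- where `K` is trivial, `W = ⊤` already forces `y i ∈ u i`
    by_cases hi : i ∈ F ∧ IsProPPrimeGroup p (B i)
    · obtain ⟨N, hN⟩ := ProfiniteGrp.exist_openNormalSubgroup_sub_open_nhds_of_one
        (hu i hi.1).1 (hu i hi.1).2
      exact ⟨N, N.isNormal', hi.2 _ N.isNormal' N.isOpen', fun _ _ _ hy => hN hy⟩
    · refine ⟨⊤, inferInstance, by simp, fun hiF y hy _ => ?_⟩
      rw [(hK i).resolve_left (fun h => hi ⟨hiF, h⟩) y hy]
      exact (hu i hiF).2
  choose W hWn hWp hWu using hW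
  let ψ : K →* Π i : F, B i ⧸ W i :=
    MonoidHom.pi fun i => (QuotientGroup.mk' (W i)).comp ((Pi.evalMonoidHom B i).comp K.subtype)
  have hker : ψ.ker ≤ U := fun y hy => by
    have hyV : (y : Π i, B i) ∈ V := huV fun i hi =>
      hWu i hi y y.2 ((QuotientGroup.eq_one_iff _).mp (congrFun hy ⟨i, hi⟩))
    rw [← SetLike.mem_coe, ← hVU]
    exact hyV
  have hcard : p.Coprime (Nat.card (Π i : F, B i ⧸ W i)) := by
    rw [Nat.card_pi]
    exact Nat.Coprime.prod_right fun i _ => hWp i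
  exact hcard.coprime_dvd_right
    ((index_dvd_of_le hker).trans (index_ker ψ ▸ card_subgroup_dvd_card ψ.range))

namespace Cardinal

theorem continuum_le_mk_setOf_infinite (α : Type*) [Countable α] [Infinite α] :
    𝔠 ≤ #{s : Set α | s.Infinite} := by
  by_contra! h
  have hfin : #{s : Set α | s.Finite} < 𝔠 :=
    Set.Countable.ofPred_finite.le_aleph0.trans_lt aleph0_lt_continuum
  have hsum := mk_sum_compl {s : Set α | s.Finite}
  rw [mk_set, mk_eq_aleph0 α, two_power_aleph0] at hsum
  exact (add_lt_of_lt aleph0_le_continuum hfin h).ne hsum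

theorem continuum_le_mk_image_setOf_infinite {α : Type u} {β : Type v} [Countable α] [Infinite α]
    {f : Set α → β} (hf : f.Injective) : 𝔠 ≤ #(f '' {s | s.Infinite}) := by
  rw [← lift_le.{u}, mk_image_eq_of_injOn_lift f _ hf.injOn, lift_continuum,
    ← lift_continuum.{v}, lift_le]
  exact continuum_le_mk_setOf_infinite α

theorem mk_le_mk_conjClasses_of_commute {G : Type*} [Group G] (hG : ∀ a b : G, Commute a b)
    {P : G → Prop} {T : Set G} (hT : ∀ x ∈ T, P x) :
    #T ≤ #{c : ConjClasses G | ∃ z ∈ c.carrier, P z} := by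
  refine mk_le_of_injective
    (f := fun x => ⟨ConjClasses.mk x, x, ConjClasses.mem_carrier_iff_mk_eq.mpr rfl, hT x x.2⟩) ?_
  intro x y hxy
  obtain ⟨c, hc⟩ := isConj_iff.mp (ConjClasses.mk_eq_mk_iff_isConj.mp (congrArg Subtype.val hxy))
  rw [(hG c x).eq, mul_inv_cancel_right] at hc
  exact Subtype.ext hc

end Cardinal

section ProcyclicProduct

variable {I : Set ℕ} {A : I → Type*} [∀ p, Group (A p)] [∀ p, TopologicalSpace (A p)]
  [∀ p, IsTopologicalGroup (A p)] [∀ p, CompactSpace (A p)] [∀ p, T2Space (A p)]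
  [∀ p, TotallyDisconnectedSpace (A p)]

theorem isProPPrimeGroup_topologicalClosure_zpowers_pi_iff (hprimes : ∀ p ∈ I, p.Prime)
    (hpro : ∀ p : I, IsProPGroup p (A p)) {x : Π p, A p}
    (hx : ∀ p, x p = 1 ∨ (zpowers (x p)).topologicalClosure = ⊤) (p : I) :
    IsProPPrimeGroup p (zpowers x).topologicalClosure ↔ x p = 1 := by
  constructor
  · intro h
    by_contra hne
    have : Nontrivial (A p) := ⟨⟨x p, 1, hne⟩⟩
    exact (hpro p).not_isProPPrimeGroup (hprimes p p.2) <| h.of_surjective _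
      ((continuous_apply p).comp continuous_subtype_val)
      ((Pi.evalMonoidHom A p).surjective_restrict_topologicalClosure_zpowers
        (continuous_apply p) ((hx p).resolve_left hne))
  · intro hxp
    refine isProPPrimeGroup_of_forall_isProPPrimeGroup_or_eq_one _ fun q => ?_
    by_cases hqp : q = p
    · subst hqp
      right
      intro y hy
      exact topologicalClosure_minimal (t := (Pi.evalMonoidHom A q).ker) _ (zpowers_le.mpr hxp)
        (isClosed_singleton.preimage (continuous_apply q)) hy
    · exact .inl <| (hpro q).isProPPrimeGroup (hprimes p p.2) (hprimes q q.2)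
        fun h => hqp (Subtype.ext h.symm)

theorem isProPPrimeGroup_topologicalClosure_zpowers_piecewise_iff [∀ p, Nontrivial (A p)]
    (hprimes : ∀ p ∈ I, p.Prime) (hpro : ∀ p : I, IsProPGroup p (A p)) {g : Π p, A p}
    (hg : ∀ p, (zpowers (g p)).topologicalClosure = ⊤) (S : Set I) [∀ p, Decidable (p ∈ S)]
    (p : I) : IsProPPrimeGroup p (zpowers (S.piecewise g 1)).topologicalClosure ↔ p ∉ S := by
  rw [isProPPrimeGroup_topologicalClosure_zpowers_pi_iff hprimes hpro (fun q => ?_)]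
  · by_cases hp : p ∈ S <;> simp [hp, ne_one_of_topologicalClosure_zpowers_eq_top (hg p)]
  · by_cases hq : q ∈ S <;> simp [hq, hg q]

end ProcyclicProduct

/-- Let `I` be an infinite set of primes and `A` the Cartesian product over `p ∈ I` of
non-trivial procyclic `p`-groups `A p`. Then `A` contains a family of at least `2^ℵ₀`
elements of infinite order whose topologically generated closed subgroups are pairwise
non-isomorphic as topological groups; in particular `A` has at least `2^ℵ₀` conjugacy
classes of elements of infinite order. -/
theorem continuum_le_conjClasses_of_prod_procyclic
    (I : Set ℕ) (hI : I.Infinite) (hprimes : ∀ p ∈ I, Nat.Prime p)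
    (A : I → Type u) [∀ p, Group (A p)] [∀ p, TopologicalSpace (A p)]
    [∀ p, IsTopologicalGroup (A p)] [∀ p, CompactSpace (A p)] [∀ p, T2Space (A p)]
    [∀ p, TotallyDisconnectedSpace (A p)] [∀ p, Nontrivial (A p)]
    (hproc : ∀ p : I, ∃ x : A p, (Subgroup.zpowers x).topologicalClosure = ⊤)
    (hpro : ∀ p : I, IsProPGroup (p : ℕ) (A p)) :
    ∃ T : Set (Π p : I, A p),
      Cardinal.continuum ≤ Cardinal.mk T ∧
      (∀ x ∈ T, ¬ IsOfFinOrder x) ∧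
      (∀ x ∈ T, ∀ y ∈ T, x ≠ y →
        ¬ ∃ e : (Subgroup.zpowers x).topologicalClosure ≃*
            (Subgroup.zpowers y).topologicalClosure, Continuous e ∧ Continuous e.symm) ∧
      Cardinal.continuum ≤
        Cardinal.mk {c : ConjClasses (Π p : I, A p) | ∃ z ∈ c.carrier, ¬ IsOfFinOrder z} := by
  classical
  have : Infinite I := hI.to_subtype
  choose g hg using hproc
  let x : Set I → Π p : I, A p := fun S => S.piecewise g 1
  have hx (S : Set I) (p : I) : IsProPPrimeGroup p (zpowers (x S)).topologicalClosure ↔ p ∉ S :=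
    isProPPrimeGroup_topologicalClosure_zpowers_piecewise_iff hprimes hpro hg S p
  have hxinj : x.Injective := fun S T hST =>
    Set.ext fun p => not_iff_not.mp <| by rw [← hx, ← hx, hST]
  have hord : ∀ y ∈ x '' {S | S.Infinite}, ¬ IsOfFinOrder y := by
    rintro _ ⟨S, hS, rfl⟩
    refine not_isOfFinOrder_of_infinite_not_isProPPrimeGroup <|
      (hS.image Subtype.val_injective.injOn).mono ?_
    rintro _ ⟨p, hp, rfl⟩
    exact ⟨hprimes p p.2, fun h => (hx S p).mp h hp⟩
  have hcard := Cardinal.continuum_le_mk_image_setOf_infinite hxinj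
  refine ⟨x '' {S | S.Infinite}, hcard, hord, ?_,
    hcard.trans (Cardinal.mk_le_mk_conjClasses_of_commute ?_ hord)⟩
  · rintro _ ⟨S, -, rfl⟩ _ ⟨T, -, rfl⟩ hST ⟨e, he, he'⟩
    refine hST (congrArg x (Set.ext fun p => not_iff_not.mp ?_))
    rw [← hx, ← hx]
    exact ⟨fun h => h.of_surjective e he e.surjective,
      fun h => h.of_surjective e.symm he' e.symm.surjective⟩
  · exact fun a b => funext fun p =>
      (commute_of_topologicalClosure_zpowers_eq_top (hg p) (a p) (b p)).eq
end

section
/- Let G be a profinite group and x, y ∈ G. Then x and y are conjugate in G if and only if for every open normal subgroup M of G the images Mx and My are conjugate in the quotient group G/M. -/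
open scoped Pointwise

universe u

/-!
The conjugacy class of `x` is the image of the compact group `G` under `g ↦ g * x * g⁻¹`, hence
closed. If `y` is conjugate to `x` modulo every open normal subgroup `M`, then every coset `y * M`
meets that class; since the open normal subgroups form a basis of neighbourhoods of `1` in a
profinite group, `y` lies in the closure of the class, that is, in the class itself.
-/

theorem exists_isConj_and_map_eq_of_surjective {G H : Type*} [Group G] [Group H] {f : G →* H}
    (hf : Function.Surjective f) {x : G} {b : H} (h : IsConj (f x) b) :
    ∃ z, IsConj x z ∧ f z = b := by
  obtain ⟨c, rfl⟩ := isConj_iff.1 h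
  obtain ⟨g, rfl⟩ := hf c
  exact ⟨g * x * g⁻¹, isConj_iff.2 ⟨g, rfl⟩, by simp⟩

theorem isClosed_setOf_isConj_s13 {G : Type*} [Group G] [TopologicalSpace G] [IsTopologicalGroup G]
    [CompactSpace G] [T2Space G] (x : G) : IsClosed {y | IsConj x y} := by
  have hrange : {y | IsConj x y} = Set.range fun g : G => g * x * g⁻¹ := by
    ext y
    simp [isConj_iff]
  rw [hrange]
  exact (isCompact_range (by fun_prop)).isClosed

theorem mem_closure_of_forall_openNormalSubgroup {G : Type*} [Group G] [TopologicalSpace G]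
    [IsTopologicalGroup G] [CompactSpace G] [TotallyDisconnectedSpace G] {S : Set G} {y : G}
    (h : ∀ M : OpenNormalSubgroup G, ∃ s ∈ S, (s : G ⧸ (M : Subgroup G)) = y) :
    y ∈ closure S := by
  refine mem_closure_iff.2 fun U hU hyU => ?_
  obtain ⟨M, hM⟩ := ProfiniteGrp.exist_openNormalSubgroup_sub_open_nhds_of_one
    (hU.preimage (continuous_const_mul y)) (by simpa using hyU)
  obtain ⟨s, hsS, hs⟩ := h M
  have hsy : y⁻¹ * s ∈ (M : Subgroup G) := QuotientGroup.eq.1 hs.symm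
  exact ⟨s, by simpa using hM hsy, hsS⟩

theorem isConj_iff_forall_openNormal_isConj_quotient_general
    {G : Type u} [Group G] [TopologicalSpace G] [IsTopologicalGroup G]
    [CompactSpace G] [TotallyDisconnectedSpace G]
    (x y : G) :
    IsConj x y ↔ ∀ M : Subgroup G, IsOpen (M : Set G) → ∀ _ : M.Normal,
      IsConj (QuotientGroup.mk x : G ⧸ M) (QuotientGroup.mk y : G ⧸ M) := by
  refine ⟨fun h M _ _ => (QuotientGroup.mk' M).map_isConj h, fun h => ?_⟩
  apply (isClosed_setOf_isConj_s13 x).closure_subset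
  exact mem_closure_of_forall_openNormalSubgroup fun M =>
    exists_isConj_and_map_eq_of_surjective (QuotientGroup.mk'_surjective (M : Subgroup G))
      (h M M.isOpen' M.isNormal')

/-- Two elements of a profinite group are conjugate if and only if their images in every
finite quotient `G/M` by an open normal subgroup `M` are conjugate. -/
theorem isConj_iff_forall_openNormal_isConj_quotient
    {G : Type u} [Group G] [TopologicalSpace G] [IsTopologicalGroup G]
    [CompactSpace G] [T2Space G] [TotallyDisconnectedSpace G]
    (x y : G) :
    IsConj x y ↔ ∀ M : Subgroup G, IsOpen (M : Set G) → ∀ _ : M.Normal,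
      IsConj (QuotientGroup.mk x : G ⧸ M) (QuotientGroup.mk y : G ⧸ M) :=
  isConj_iff_forall_openNormal_isConj_quotient_general x y
end
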